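/- arXiv:2001.07432 — 3 statements merged into one kernel-verified Lean document; each statement's English description precedes it below -/
import Mathlib

section
/- Let K be an algebraically closed field, s ≥ 1, m ≥ 1, q ∈ K* of order m, and h_1, …, h_s positive divisors of m with k_i = m/h_i. Given α_1,…,α_s, β_1,…,β_s ∈ K*, the K-vector space M with basis e(a_1,…,a_s), a_i ∈ ℤ/k_iℤ, admits a module structure over the tensor product A_{q^{h_1}} ⊗ ⋯ ⊗ A_{q^{h_s}} of rank-2 quantum tori via e(a)·X_i = α_i e(a_1,…,a_i+1,…,a_s) and e(a)·Y_i = α_i^{-1}β_i (q^{h_i})^{a_i−1} e(a_1,…,a_i−1,…,a_s), i.e., these operators satisfy X_iY_i = q^{h_i}Y_iX_i and all other pairs of operators commute. -/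
/-!
In the basis `e a` every `X i` and `Y i` has a monomial matrix: it shifts the `i`-th coordinate
of `a` by `±1` and rescales by a nonzero weight. Composites of monomial maps are monomial, so each
relation is checked on a single basis vector by comparing shifts and weights. The only nontrivial
weight identity is `u ^ (x.val) = u * u ^ (x - 1).val` for `u = q ^ h i` and `x : ZMod (k i)`,
which holds because `u ^ k i = q ^ m = 1`. A monomial map with nonzero weights permuting a finite
basis is surjective, hence bijective.
-/

/-- The standard basis vector `e a` of the `K`-vector space with basis indexed by
`∏ i, ℤ/(k i)ℤ`. -/
def e (K : Type*) [Field K] {s : ℕ} (k : Fin s → ℕ) (a : ∀ i, ZMod (k i)) :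
    (∀ i, ZMod (k i)) → K := Pi.single a 1

open Function

theorem pow_zmod_val_natCast {M : Type*} [Monoid M] {u : M} {k : ℕ} (hu : u ^ k = 1) (n : ℕ) :
    u ^ (n : ZMod k).val = u ^ n := by
  rw [ZMod.val_natCast, ← pow_eq_pow_mod n hu]

theorem pow_zmod_val_eq_mul_pow_val_sub_one {M : Type*} [Monoid M] {u : M} {k : ℕ} [NeZero k]
    (hu : u ^ k = 1) (x : ZMod k) : u ^ x.val = u * u ^ (x - 1).val := by
  have hx : x = (((x - 1).val + 1 : ℕ) : ZMod k) := by simp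
  rw [hx, pow_zmod_val_natCast hu, pow_succ', ← hx]

namespace LinearMap

variable {K σ : Type*} [Field K] [DecidableEq σ]

def IsMonomial (f : (σ → K) →ₗ[K] σ → K) (τ : σ → σ) (c : σ → K) : Prop :=
  ∀ a, f (Pi.single a 1) = c a • Pi.single (τ a) 1

namespace IsMonomial

variable {f g : (σ → K) →ₗ[K] σ → K} {τ π : σ → σ} {c d : σ → K}

theorem comp (hf : IsMonomial f τ c) (hg : IsMonomial g π d) :
    IsMonomial (f ∘ₗ g) (τ ∘ π) (fun a => d a * c (π a)) := fun a => by
  rw [comp_apply, hg, map_smul, hf, smul_smul, Function.comp_apply]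

theorem smul (hf : IsMonomial f τ c) (r : K) : IsMonomial (r • f) τ (fun a => r * c a) :=
  fun a => by rw [smul_apply, hf, smul_smul]

theorem eq [Finite σ] (hf : IsMonomial f τ c) (hg : IsMonomial g π d) (hτ : ∀ a, τ a = π a)
    (hc : ∀ a, c a = d a) : f = g :=
  pi_ext fun a r => by
    rw [← mul_one r, ← smul_eq_mul, Pi.single_smul', map_smul, map_smul, hf, hg, hτ, hc]

theorem bijective [Finite σ] (hf : IsMonomial f τ c) (hτ : τ.Surjective) (hc : ∀ a, c a ≠ 0) :
    Bijective f := by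
  have hsurj : Surjective f := by
    rw [← range_eq_top, ← top_le_iff, ← (Pi.basisFun K σ).span_eq, Submodule.span_le]
    rintro _ ⟨b, rfl⟩
    obtain ⟨a, rfl⟩ := hτ b
    refine ⟨(c a)⁻¹ • Pi.single a 1, ?_⟩
    rw [map_smul, hf, smul_smul, inv_mul_cancel₀ (hc a), one_smul, Pi.basisFun_apply]
  exact ⟨injective_iff_surjective.mpr hsurj, hsurj⟩

end IsMonomial

end LinearMap

theorem Function.update_apply_update_apply_comm {ι : Type*} [DecidableEq ι] {β : ι → Type*}
    {i j : ι} (hij : i ≠ j) (f : β i → β i) (g : β j → β j) (a : ∀ l, β l) :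
    update (update a j (g (a j))) i (f (update a j (g (a j)) i)) =
      update (update a i (f (a i))) j (g (update a i (f (a i)) j)) := by
  rw [update_of_ne hij, update_of_ne hij.symm, update_comm hij]

theorem stmt_12_general {K : Type*} [Field K] (s m : ℕ)
    (hm : 0 < m) (q : Kˣ) (hq : orderOf q = m)
    (h k : Fin s → ℕ) (hdvd : ∀ i, h i ∣ m)
    (hk : ∀ i, k i = m / h i)
    (α β : Fin s → K) (hα : ∀ i, α i ≠ 0) (hβ : ∀ i, β i ≠ 0)
    (X Y : Fin s → ((∀ i, ZMod (k i)) → K) →ₗ[K] ((∀ i, ZMod (k i)) → K))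
    (hX : ∀ (i : Fin s) (a : ∀ i, ZMod (k i)),
      X i (e K k a) = α i • e K k (Function.update a i (a i + 1)))
    (hY : ∀ (i : Fin s) (a : ∀ i, ZMod (k i)),
      Y i (e K k a) = ((α i)⁻¹ * β i * ((q : K) ^ h i) ^ (a i - 1).val) •
        e K k (Function.update a i (a i - 1))) :
    (∀ i, ∀ v, Y i (X i v) = ((q : K) ^ h i) • X i (Y i v)) ∧
    (∀ i j, i ≠ j →
      (∀ v, X i (X j v) = X j (X i v)) ∧
      (∀ v, X i (Y j v) = Y j (X i v)) ∧
      (∀ v, Y i (Y j v) = Y j (Y i v))) ∧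
    (∀ i, Function.Bijective (X i) ∧ Function.Bijective (Y i)) := by
  have hkh : ∀ i, h i * k i = m := fun i => by rw [hk i, Nat.mul_div_cancel' (hdvd i)]
  have : ∀ i, NeZero (k i) := fun i => ⟨right_ne_zero_of_mul (hkh i ▸ hm.ne')⟩
  have hroot : ∀ i, ((q : K) ^ h i) ^ k i = 1 := fun i => by
    rw [← pow_mul, hkh i, ← hq, ← Units.val_pow_eq_pow_val, pow_orderOf_eq_one, Units.val_one]
  have hXm : ∀ i, (X i).IsMonomial (fun a => update a i (a i + 1)) (fun _ => α i) := hX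
  have hYm : ∀ i, (Y i).IsMonomial (fun a => update a i (a i - 1))
      (fun a => (α i)⁻¹ * β i * ((q : K) ^ h i) ^ (a i - 1).val) := hY
  refine ⟨fun i v => ?_, fun i j hij => ⟨fun v => ?_, fun v => ?_, fun v => ?_⟩,
    fun i => ⟨?_, ?_⟩⟩
  · refine congr($(((hYm i).comp (hXm i)).eq (((hXm i).comp (hYm i)).smul _) (by simp)
      fun a => ?_) v)
    simp only [update_self, add_sub_cancel_right]
    rw [pow_zmod_val_eq_mul_pow_val_sub_one (hroot i) (a i)]
    field_simp
  · exact congr($(((hXm i).comp (hXm j)).eq ((hXm j).comp (hXm i))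
      (fun a => update_apply_update_apply_comm hij (· + 1) (· + 1) a) fun _ => mul_comm _ _) v)
  · refine congr($(((hXm i).comp (hYm j)).eq ((hYm j).comp (hXm i))
      (fun a => update_apply_update_apply_comm hij (· + 1) (· - 1) a) fun a => ?_) v)
    simp only [update_of_ne hij.symm, mul_comm]
  · refine congr($(((hYm i).comp (hYm j)).eq ((hYm j).comp (hYm i))
      (fun a => update_apply_update_apply_comm hij (· - 1) (· - 1) a) fun a => ?_) v)
    simp only [update_of_ne hij, update_of_ne hij.symm, mul_comm]
  · exact (hXm i).bijective (fun b => ⟨update b i (b i - 1), by simp⟩) fun _ => hα i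
  · exact (hYm i).bijective (fun b => ⟨update b i (b i + 1), by simp⟩) fun _ => by
      simp [hα, hβ]

/-- The multiparameter action formulas make the `K`-space with basis
`e a`, `a ∈ ∏ i, ℤ/k_iℤ`, into a module over the tensor product
`A_{q^{h_1}} ⊗ ⋯ ⊗ A_{q^{h_s}}` of rank-2 quantum tori: `X_i Y_i = q^{h_i} Y_i X_i`,
all other pairs of operators commute, and all operators act invertibly. -/
theorem stmt_12 {K : Type*} [Field K] [IsAlgClosed K] (s m : ℕ) (hs : 1 ≤ s)
    (hm : 0 < m) (q : Kˣ) (hq : orderOf q = m)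
    (h k : Fin s → ℕ) (hh : ∀ i, 0 < h i) (hdvd : ∀ i, h i ∣ m)
    (hk : ∀ i, k i = m / h i)
    (α β : Fin s → K) (hα : ∀ i, α i ≠ 0) (hβ : ∀ i, β i ≠ 0)
    (X Y : Fin s → ((∀ i, ZMod (k i)) → K) →ₗ[K] ((∀ i, ZMod (k i)) → K))
    (hX : ∀ (i : Fin s) (a : ∀ i, ZMod (k i)),
      X i (e K k a) = α i • e K k (Function.update a i (a i + 1)))
    (hY : ∀ (i : Fin s) (a : ∀ i, ZMod (k i)),
      Y i (e K k a) = ((α i)⁻¹ * β i * ((q : K) ^ h i) ^ (a i - 1).val) •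
        e K k (Function.update a i (a i - 1))) :
    (∀ i, ∀ v, Y i (X i v) = ((q : K) ^ h i) • X i (Y i v)) ∧
    (∀ i j, i ≠ j →
      (∀ v, X i (X j v) = X j (X i v)) ∧
      (∀ v, X i (Y j v) = Y j (X i v)) ∧
      (∀ v, Y i (Y j v) = Y j (Y i v))) ∧
    (∀ i, Function.Bijective (X i) ∧ Function.Bijective (Y i)) :=
  stmt_12_general s m hm q hq h k hdvd hk α β hα hβ X Y hX hY
end

section
/- With the module M(α,β) of the multiparameter construction (basis e(a_1,…,a_s), a_i ∈ ℤ/k_iℤ, over the algebra generated by X_1,Y_1,…,X_s,Y_s with X_iY_i = q^{h_i}Y_iX_i and all other pairs commuting, actions e(a)·X_i = α_i e(…,a_i+1,…), e(a)·Y_i = α_i^{-1}β_i(q^{h_i})^{a_i−1} e(…,a_i−1,…)), the module M(α,β) is simple of K-dimension ∏_{i=1}^s k_i. -/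
/-- The multiparameter module `M(α,β)` (with basis `e a`, `a ∈ ∏ i, ℤ/k_iℤ`, over the
algebra generated by `X_1,Y_1,…,X_s,Y_s` with `X_iY_i = q^{h_i}Y_iX_i` and all other
pairs commuting) is simple of `K`-dimension `∏ i, k i`. -/
theorem stmt_13 {K : Type*} [Field K] [IsAlgClosed K] (s m : ℕ) (hs : 1 ≤ s)
    (hm : 0 < m) (q : Kˣ) (hq : orderOf q = m)
    (h k : Fin s → ℕ) (hh : ∀ i, 0 < h i) (hdvd : ∀ i, h i ∣ m)
    (hk : ∀ i, k i = m / h i)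
    (α β : Fin s → K) (hα : ∀ i, α i ≠ 0) (hβ : ∀ i, β i ≠ 0)
    (X Y : Fin s → ((∀ i, ZMod (k i)) → K) →ₗ[K] ((∀ i, ZMod (k i)) → K))
    (hX : ∀ (i : Fin s) (a : ∀ i, ZMod (k i)),
      X i (e K k a) = α i • e K k (Function.update a i (a i + 1)))
    (hY : ∀ (i : Fin s) (a : ∀ i, ZMod (k i)),
      Y i (e K k a) = ((α i)⁻¹ * β i * ((q : K) ^ h i) ^ (a i - 1).val) •
        e K k (Function.update a i (a i - 1))) :
    (∀ P : Submodule K ((∀ i, ZMod (k i)) → K),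
      (∀ i, ∀ v ∈ P, X i v ∈ P) → (∀ i, ∀ v ∈ P, Y i v ∈ P) → P = ⊥ ∨ P = ⊤) ∧
    Module.finrank K ((∀ i, ZMod (k i)) → K) = ∏ i, k i := by
  classical
  haveI : ∀ i, NeZero (k i) := fun i =>
    ⟨by rw [hk i]; exact (Nat.div_pos (Nat.le_of_dvd hm (hdvd i)) (hh i)).ne'⟩
  -- order of q^(h i) in Kˣ is k i
  have hζord : ∀ i, orderOf (q ^ h i) = k i := by
    intro i
    rw [orderOf_pow' _ (hh i).ne', hq, Nat.gcd_eq_right (hdvd i), hk i]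
  set lam : ∀ i, ZMod (k i) → K := fun i c => β i * ((q : K) ^ h i) ^ c.val with hlamdef
  have hlam_inj : ∀ i (c c' : ZMod (k i)), lam i c = lam i c' → c = c' := by
    intro i c c' hcc
    have h1 : ((q : K) ^ h i) ^ c.val = ((q : K) ^ h i) ^ c'.val :=
      mul_left_cancel₀ (hβ i) hcc
    have h1u : (q ^ h i) ^ c.val = (q ^ h i) ^ c'.val := by
      apply Units.ext
      rw [Units.val_pow_eq_pow_val, Units.val_pow_eq_pow_val,
        Units.val_pow_eq_pow_val]
      exact h1
    have h2 := pow_eq_pow_iff_modEq.mp h1u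
    rw [hζord i] at h2
    have h3 : c.val % k i = c'.val % k i := h2
    rw [Nat.mod_eq_of_lt (ZMod.val_lt c), Nat.mod_eq_of_lt (ZMod.val_lt c')] at h3
    have := ZMod.natCast_rightInverse (n := k i)
    calc c = ((c.val : ℕ) : ZMod (k i)) := (this c).symm
      _ = ((c'.val : ℕ) : ZMod (k i)) := by rw [h3]
      _ = c' := this c'
  -- eigenvalue computation on basis vectors
  have heig : ∀ (i : Fin s) (b : ∀ j, ZMod (k j)),
      Y i (X i (e K k b)) = lam i (b i) • e K k b := by
    intro i b
    rw [hX, map_smul, hY]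
    have h1 : Function.update b i (b i + 1) i = b i + 1 := Function.update_self ..
    rw [h1]
    have h2 : b i + 1 - 1 = b i := by ring
    rw [h2, Function.update_idem, Function.update_eq_self, smul_smul]
    congr 1
    rw [show α i * ((α i)⁻¹ * β i * ((q : K) ^ h i) ^ (b i).val)
        = (α i * (α i)⁻¹) * (β i * ((q : K) ^ h i) ^ (b i).val) by ring,
      mul_inv_cancel₀ (hα i), one_mul]
  -- the operator Y i ∘ X i acts diagonally on all vectors
  have hdiag : ∀ (i : Fin s) (u : (∀ j, ZMod (k j)) → K),
      Y i (X i u) = fun c => lam i (c i) * u c := by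
    intro i u
    let D : ((∀ j, ZMod (k j)) → K) →ₗ[K] ((∀ j, ZMod (k j)) → K) :=
      { toFun := fun w c => lam i (c i) * w c
        map_add' := by intro w w'; funext c; simp [mul_add]
        map_smul' := by
          intro r w; funext c
          simp only [Pi.smul_apply, smul_eq_mul, RingHom.id_apply]
          ring }
    have hD : (Y i).comp (X i) = D := by
      apply (Pi.basisFun K _).ext
      intro b
      have hb : (Pi.basisFun K ((∀ j, ZMod (k j)))) b = e K k b := by
        simp [e, Pi.basisFun_apply]
      rw [LinearMap.comp_apply, hb, heig]
      funext c
      simp only [D, LinearMap.coe_mk, AddHom.coe_mk, Pi.smul_apply, smul_eq_mul, e,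
        Pi.single_apply]
      by_cases hcb : c = b
      · subst hcb; simp
      · simp [hcb]
    have := LinearMap.congr_fun hD u
    simpa [D] using this
  constructor
  · intro P hXP hYP
    by_cases hbot : P = ⊥
    · exact Or.inl hbot
    right
    obtain ⟨v, hvP, hv0⟩ := (Submodule.ne_bot_iff P).mp hbot
    obtain ⟨a, ha⟩ : ∃ a, v a ≠ 0 := by
      by_contra hc; push_neg at hc; exact hv0 (funext hc)
    -- key induction: from any vector in P with nonzero coordinate c, get e c ∈ P
    have key : ∀ (n : ℕ) (u : (∀ j, ZMod (k j)) → K), u ∈ P → ∀ c, u c ≠ 0 →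
        (Finset.univ.filter fun b => u b ≠ 0).card ≤ n → e K k c ∈ P := by
      intro n
      induction n with
      | zero =>
        intro u hu c hc hcard
        exfalso
        have hcmem : c ∈ Finset.univ.filter fun b => u b ≠ 0 := by simp [hc]
        have := Finset.card_pos.mpr ⟨c, hcmem⟩
        omega
      | succ n ih =>
        intro u hu c hc hcard
        by_cases hsupp : ∀ b, u b ≠ 0 → b = c
        · have huc : e K k c = (u c)⁻¹ • u := by
            funext d
            by_cases hd : d = c
            · subst hd
              simp [e, Pi.single_apply, inv_mul_cancel₀ hc]
            · have hud : u d = 0 := by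
                by_contra hne; exact hd (hsupp d hne)
              simp [e, Pi.single_apply, hd, hud]
          rw [huc]
          exact P.smul_mem _ hu
        · push_neg at hsupp
          obtain ⟨b, hb0, hbc⟩ := hsupp
          obtain ⟨i, hbci⟩ := Function.ne_iff.mp hbc
          set w : (∀ j, ZMod (k j)) → K := fun d => (lam i (d i) - lam i (b i)) * u d
            with hwdef
          have hwP : w ∈ P := by
            have h1 : Y i (X i u) ∈ P := hYP i _ (hXP i _ hu)
            have h3 : w = Y i (X i u) - lam i (b i) • u := by
              rw [hdiag]; funext d
              simp only [hwdef, Pi.sub_apply, Pi.smul_apply, smul_eq_mul]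
              ring
            rw [h3]
            exact P.sub_mem h1 (P.smul_mem _ hu)
          have hwc : w c ≠ 0 := by
            simp only [hwdef]
            refine mul_ne_zero ?_ hc
            intro hsub
            exact hbci ((hlam_inj i _ _ (sub_eq_zero.mp hsub)).symm)
          have hwb : w b = 0 := by simp [hwdef]
          have hsub2 : (Finset.univ.filter fun d => w d ≠ 0) ⊆
              (Finset.univ.filter fun d => u d ≠ 0).erase b := by
            intro d hd
            simp only [Finset.mem_filter, Finset.mem_univ, true_and] at hd
            rw [Finset.mem_erase]
            constructor
            · rintro rfl; exact hd hwb
            · simp only [Finset.mem_filter, Finset.mem_univ, true_and]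
              intro hud
              exact hd (by simp [hwdef, hud])
          have hble : b ∈ Finset.univ.filter fun d => u d ≠ 0 := by simp [hb0]
          have hcard' : (Finset.univ.filter fun d => w d ≠ 0).card ≤ n := by
            have h4 := Finset.card_le_card hsub2
            have h5 := Finset.card_erase_of_mem hble
            omega
          exact ih w hwP c hwc hcard'
    have hbase : e K k a ∈ P := key _ v hvP a ha le_rfl
    -- shifting one coordinate by 1 stays in P
    have hstep : ∀ (i : Fin s) (c : ∀ j, ZMod (k j)), e K k c ∈ P →
        e K k (Function.update c i (c i + 1)) ∈ P := by
      intro i c hcP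
      have h1 : X i (e K k c) ∈ P := hXP i _ hcP
      rw [hX] at h1
      have h2 := P.smul_mem (α i)⁻¹ h1
      rwa [smul_smul, inv_mul_cancel₀ (hα i), one_smul] at h2
    have hshift : ∀ (j : ℕ) (i : Fin s) (c : ∀ j, ZMod (k j)), e K k c ∈ P →
        e K k (Function.update c i (c i + (j : ZMod (k i)))) ∈ P := by
      intro j
      induction j with
      | zero => intro i c hc; simpa using hc
      | succ j ihj =>
        intro i c hc
        have h1 := hstep i _ (ihj i c hc)
        have h2 : Function.update (Function.update c i (c i + (j : ZMod (k i)))) i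
            ((Function.update c i (c i + (j : ZMod (k i)))) i + 1)
            = Function.update c i (c i + ((j + 1 : ℕ) : ZMod (k i))) := by
          rw [Function.update_self, Function.update_idem]
          congr 1
          push_cast
          ring
        rwa [h2] at h1
    have hall : ∀ b, e K k b ∈ P := by
      suffices hF : ∀ (t : Finset (Fin s)) (b : ∀ j, ZMod (k j)),
          (∀ i ∉ t, b i = a i) → e K k b ∈ P by
        intro b
        exact hF Finset.univ b (fun i hi => absurd (Finset.mem_univ i) hi)
      intro t
      induction t using Finset.induction_on with
      | empty =>
        intro b hb
        have : b = a := funext fun i => hb i (Finset.notMem_empty i)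
        rw [this]; exact hbase
      | @insert i t hit iht =>
        intro b hb
        have hb' : ∀ j ∉ t, Function.update b i (a i) j = a j := by
          intro j hj
          by_cases hji : j = i
          · subst hji; simp
          · rw [Function.update_of_ne hji]
            exact hb j (by simp [hji, hj])
        have h1 := iht (Function.update b i (a i)) hb'
        have h2 := hshift (b i - a i).val i _ h1
        have h3 : Function.update (Function.update b i (a i)) i
            ((Function.update b i (a i)) i + (((b i - a i).val : ℕ) : ZMod (k i)))
            = b := by
          rw [Function.update_self, Function.update_idem,
            ZMod.natCast_rightInverse (b i - a i), add_comm, sub_add_cancel,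
            Function.update_eq_self]
        rwa [h3] at h2
    -- conclude P = ⊤
    rw [eq_top_iff]
    intro u _
    have hu : u = ∑ b : (∀ j, ZMod (k j)), u b • e K k b := by
      have h1 : ∀ b : (∀ j, ZMod (k j)), u b • e K k b = Pi.single b (u b) := by
        intro b
        rw [e, ← Pi.single_smul, smul_eq_mul, mul_one]
      rw [Finset.sum_congr rfl fun b _ => h1 b, Finset.univ_sum_single]
    rw [hu]
    exact Submodule.sum_mem _ fun b _ => P.smul_mem _ (hall b)
  · rw [Module.finrank_pi, Fintype.card_pi]
    exact Finset.prod_congr rfl fun i _ => ZMod.card (k i)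
end

section
/- In the multiparameter module M with basis e(a_1,…,a_s), a_i ∈ ℤ/k_iℤ, every nonzero submodule (under the operators X_i, Y_i of the standard construction) contains a basis vector e(a_1,…,a_s). Consequently M is simple. -/
open Function

theorem Pi.mul_single_one {ι R : Type*} [DecidableEq ι] [MulZeroOneClass R] (μ : ι → R) (a : ι) :
    μ * Pi.single a 1 = μ a • Pi.single a 1 := by
  funext c
  by_cases hc : c = a
  · subst hc; simp
  · simp [hc]

theorem Submodule.exists_single_one_mem_of_separating {ι K : Type*} [Fintype ι] [DecidableEq ι]
    [DivisionRing K] {P : Submodule K (ι → K)} (hP : P ≠ ⊥)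
    (hsep : ∀ a b, a ≠ b → ∃ μ : ι → K, μ a ≠ μ b ∧ ∀ v ∈ P, μ * v ∈ P) :
    ∃ a, Pi.single a 1 ∈ P := by
  obtain ⟨v, hvP, hv0⟩ := Submodule.exists_mem_ne_zero_of_ne_bot hP
  induction hn : (support v).ncard using Nat.strong_induction_on generalizing v with
  | _ n ih =>
  obtain ⟨a, ha⟩ : ∃ a, v a ≠ 0 := Function.ne_iff.mp hv0
  by_cases hsupp : ∀ b, v b ≠ 0 → b = a
  · have hv : v = v a • Pi.single a 1 := by
      funext c
      by_cases hc : c = a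
      · subst hc; simp
      · simp only [Pi.smul_apply, Pi.single_apply, hc, if_false, smul_zero]
        by_contra hvc
        exact hc (hsupp c hvc)
    rw [hv, Submodule.smul_mem_iff P ha] at hvP
    exact ⟨a, hvP⟩
  push Not at hsupp
  obtain ⟨b, hb, hba⟩ := hsupp
  obtain ⟨μ, hμ, hμP⟩ := hsep b a hba
  -- Subtracting `μ a • v` from `μ * v` kills the coordinate `a` but not `b`.
  set w := μ * v - μ a • v
  have hw : ∀ c, w c = (μ c - μ a) * v c := fun c => by simp [w, sub_mul]
  have hwb : w b ≠ 0 := by rw [hw]; exact mul_ne_zero (sub_ne_zero.mpr hμ) hb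
  have hsupp_lt : (support w).ncard < (support v).ncard := by
    refine Set.ncard_lt_ncard ((Set.ssubset_iff_of_subset ?_).mpr ⟨a, ha, by simp [hw]⟩)
      (Set.toFinite _)
    intro c
    simp only [mem_support, hw]
    exact right_ne_zero_of_mul
  exact ih _ (hn ▸ hsupp_lt) w (sub_mem (hμP v hvP) (P.smul_mem _ hvP))
    (fun h => hwb (congrFun h b)) rfl

theorem AddSubmonoid.closure_range_single_one_eq_top {ι : Type*} [Fintype ι] [DecidableEq ι]
    (k : ι → ℕ) [∀ i, NeZero (k i)] :
    closure (Set.range fun i => (Pi.single i 1 : ∀ i, ZMod (k i))) = ⊤ := by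
  refine eq_top_iff.mpr fun d _ => ?_
  rw [← Finset.univ_sum_single d]
  refine _root_.sum_mem fun i _ => ?_
  have hd : Pi.single i (d i) = (d i).val • (Pi.single i 1 : ∀ i, ZMod (k i)) := by
    rw [← Pi.single_smul, nsmul_one, ZMod.natCast_zmod_val]
  rw [hd]
  exact nsmul_mem (subset_closure (Set.mem_range_self i)) _

theorem Set.eq_univ_of_add_mem_of_closure_eq_top {G : Type*} [AddGroup G] {S T : Set G}
    (hT : AddSubmonoid.closure T = ⊤) (hS : ∀ b ∈ S, ∀ t ∈ T, b + t ∈ S) {a : G} (ha : a ∈ S) :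
    S = Set.univ := by
  refine Set.eq_univ_of_forall fun c => ?_
  have hd : -a + c ∈ AddSubmonoid.closure T := hT ▸ AddSubmonoid.mem_top _
  simpa using AddSubmonoid.closure_induction_right (motive := fun d _ => a + d ∈ S)
    (by simpa using ha) (fun x _ y hy hx => by simpa [add_assoc] using hS _ hx y hy) hd

theorem Function.update_add_eq_add_single {ι : Type*} [DecidableEq ι] {G : ι → Type*}
    [∀ i, AddGroup (G i)] (g : ∀ i, G i) (i : ι) (x : G i) :
    update g i (g i + x) = g + Pi.single i x := by
  rw [Pi.update_eq_sub_add_single, Pi.single_add, ← add_assoc, sub_add_cancel]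

theorem injective_mul_pow_val_sub_one {K : Type*} [Field K] {n : ℕ} [NeZero n] {r β : K}
    (hr : orderOf r = n) (hβ : β ≠ 0) : Injective fun c : ZMod n => β * r ^ (c - 1).val := by
  intro c d hcd
  have hval : (c - 1).val = (d - 1).val :=
    pow_injOn_Iio_orderOf ((c - 1).val_lt.trans_eq hr.symm) ((d - 1).val_lt.trans_eq hr.symm)
      (mul_left_cancel₀ hβ hcd)
  exact sub_left_injective (ZMod.val_injective n hval)

section Model

variable {K : Type*} [Field K] {s : ℕ} {k : Fin s → ℕ} [∀ i, NeZero (k i)]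

theorem comp_eq_mulLeft_of_apply_e {i : Fin s}
    {X Y : ((∀ i, ZMod (k i)) → K) →ₗ[K] ((∀ i, ZMod (k i)) → K)} {α β r : K} (hα : α ≠ 0)
    (hX : ∀ a, X (e K k a) = α • e K k (update a i (a i + 1)))
    (hY : ∀ a, Y (e K k a) = (α⁻¹ * β * r ^ (a i - 1).val) • e K k (update a i (a i - 1))) :
    X ∘ₗ Y = LinearMap.mulLeft K fun c => β * r ^ (c i - 1).val := by
  refine (Pi.basisFun K _).ext fun a => ?_
  rw [Pi.basisFun_apply, LinearMap.comp_apply, LinearMap.mulLeft_apply, Pi.mul_single_one]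
  change X (Y (e K k a)) = _ • e K k a
  rw [hY, map_smul, hX, smul_smul, update_idem, update_self, sub_add_cancel, update_eq_self]
  congr 1
  field_simp

theorem exists_e_mem {X Y : Fin s → ((∀ i, ZMod (k i)) → K) →ₗ[K] ((∀ i, ZMod (k i)) → K)}
    {α β r : Fin s → K} (hα : ∀ i, α i ≠ 0) (hβ : ∀ i, β i ≠ 0) (hr : ∀ i, orderOf (r i) = k i)
    (hX : ∀ i a, X i (e K k a) = α i • e K k (update a i (a i + 1)))
    (hY : ∀ i a, Y i (e K k a) =
      ((α i)⁻¹ * β i * r i ^ (a i - 1).val) • e K k (update a i (a i - 1)))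
    {P : Submodule K ((∀ i, ZMod (k i)) → K)} (hXP : ∀ i, ∀ v ∈ P, X i v ∈ P)
    (hYP : ∀ i, ∀ v ∈ P, Y i v ∈ P) (hP : P ≠ ⊥) :
    ∃ a, e K k a ∈ P := by
  refine P.exists_single_one_mem_of_separating hP fun a b hab => ?_
  obtain ⟨i, hi⟩ := Function.ne_iff.mp hab
  refine ⟨fun c => β i * r i ^ (c i - 1).val,
    (injective_mul_pow_val_sub_one (hr i) (hβ i)).ne hi, fun v hv => ?_⟩
  rw [← LinearMap.mulLeft_apply (R := K), ← comp_eq_mulLeft_of_apply_e (hα i) (hX i) (hY i)]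
  exact hXP i _ (hYP i v hv)

theorem eq_top_of_e_mem {X : Fin s → ((∀ i, ZMod (k i)) → K) →ₗ[K] ((∀ i, ZMod (k i)) → K)}
    {α : Fin s → K} (hα : ∀ i, α i ≠ 0)
    (hX : ∀ i a, X i (e K k a) = α i • e K k (update a i (a i + 1)))
    {P : Submodule K ((∀ i, ZMod (k i)) → K)} (hXP : ∀ i, ∀ v ∈ P, X i v ∈ P) {a : ∀ i, ZMod (k i)}
    (ha : e K k a ∈ P) : P = ⊤ := by
  have hshift : ∀ b ∈ {b | e K k b ∈ P}, ∀ t ∈ Set.range fun i => (Pi.single i 1 : ∀ i, ZMod (k i)),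
      b + t ∈ {b | e K k b ∈ P} := by
    rintro b hb _ ⟨i, rfl⟩
    have := hXP i _ hb
    rwa [hX, P.smul_mem_iff (hα i), update_add_eq_add_single] at this
  have hall := Set.eq_univ_of_add_mem_of_closure_eq_top
    (AddSubmonoid.closure_range_single_one_eq_top k) hshift ha
  rw [eq_top_iff, ← (Pi.basisFun K _).span_eq, Submodule.span_le]
  rintro _ ⟨b, rfl⟩
  rw [Pi.basisFun_apply]
  exact Set.eq_univ_iff_forall.mp hall b

end Model

theorem stmt_14_general {K : Type*} [Field K] (s m : ℕ)
    (hm : 0 < m) (q : Kˣ) (hq : orderOf q = m)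
    (h k : Fin s → ℕ) (hdvd : ∀ i, h i ∣ m)
    (hk : ∀ i, k i = m / h i)
    (α β : Fin s → K) (hα : ∀ i, α i ≠ 0) (hβ : ∀ i, β i ≠ 0)
    (X Y : Fin s → ((∀ i, ZMod (k i)) → K) →ₗ[K] ((∀ i, ZMod (k i)) → K))
    (hX : ∀ (i : Fin s) (a : ∀ i, ZMod (k i)),
      X i (e K k a) = α i • e K k (Function.update a i (a i + 1)))
    (hY : ∀ (i : Fin s) (a : ∀ i, ZMod (k i)),
      Y i (e K k a) = ((α i)⁻¹ * β i * ((q : K) ^ h i) ^ (a i - 1).val) •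
        e K k (Function.update a i (a i - 1))) :
    (∀ P : Submodule K ((∀ i, ZMod (k i)) → K),
      (∀ i, ∀ v ∈ P, X i v ∈ P) → (∀ i, ∀ v ∈ P, Y i v ∈ P) → P ≠ ⊥ →
        ∃ a : ∀ i, ZMod (k i), e K k a ∈ P) ∧
    (∀ P : Submodule K ((∀ i, ZMod (k i)) → K),
      (∀ i, ∀ v ∈ P, X i v ∈ P) → (∀ i, ∀ v ∈ P, Y i v ∈ P) → P = ⊥ ∨ P = ⊤) := by
  have hh : ∀ i, 0 < h i := fun i => Nat.pos_of_dvd_of_pos (hdvd i) hm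
  have : ∀ i, NeZero (k i) := fun i =>
    ⟨by rw [hk i]; exact (Nat.div_pos (Nat.le_of_dvd hm (hdvd i)) (hh i)).ne'⟩
  have hr : ∀ i, orderOf ((q : K) ^ h i) = k i := fun i => by
    rw [orderOf_pow_of_dvd (hh i).ne' (by rw [orderOf_units, hq]; exact hdvd i), orderOf_units, hq, hk i]
  have hbasis : ∀ P : Submodule K ((∀ i, ZMod (k i)) → K),
      (∀ i, ∀ v ∈ P, X i v ∈ P) → (∀ i, ∀ v ∈ P, Y i v ∈ P) → P ≠ ⊥ → ∃ a, e K k a ∈ P :=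
    fun P hXP hYP hP => exists_e_mem hα hβ hr hX hY hXP hYP hP
  refine ⟨hbasis, fun P hXP hYP => or_iff_not_imp_left.mpr fun hP => ?_⟩
  obtain ⟨a, ha⟩ := hbasis P hXP hYP hP
  exact eq_top_of_e_mem hα hX hXP ha

/-- Every nonzero submodule of the multiparameter module `M` (invariant under the
operators `X_i, Y_i` of the standard construction) contains a basis vector
`e a`; consequently `M` is simple. -/
theorem stmt_14 {K : Type*} [Field K] (s m : ℕ) (hs : 1 ≤ s)
    (hm : 0 < m) (q : Kˣ) (hq : orderOf q = m)
    (h k : Fin s → ℕ) (hh : ∀ i, 0 < h i) (hdvd : ∀ i, h i ∣ m)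
    (hk : ∀ i, k i = m / h i)
    (α β : Fin s → K) (hα : ∀ i, α i ≠ 0) (hβ : ∀ i, β i ≠ 0)
    (X Y : Fin s → ((∀ i, ZMod (k i)) → K) →ₗ[K] ((∀ i, ZMod (k i)) → K))
    (hX : ∀ (i : Fin s) (a : ∀ i, ZMod (k i)),
      X i (e K k a) = α i • e K k (Function.update a i (a i + 1)))
    (hY : ∀ (i : Fin s) (a : ∀ i, ZMod (k i)),
      Y i (e K k a) = ((α i)⁻¹ * β i * ((q : K) ^ h i) ^ (a i - 1).val) •
        e K k (Function.update a i (a i - 1))) :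
    (∀ P : Submodule K ((∀ i, ZMod (k i)) → K),
      (∀ i, ∀ v ∈ P, X i v ∈ P) → (∀ i, ∀ v ∈ P, Y i v ∈ P) → P ≠ ⊥ →
        ∃ a : ∀ i, ZMod (k i), e K k a ∈ P) ∧
    (∀ P : Submodule K ((∀ i, ZMod (k i)) → K),
      (∀ i, ∀ v ∈ P, X i v ∈ P) → (∀ i, ∀ v ∈ P, Y i v ∈ P) → P = ⊥ ∨ P = ⊤) :=
  stmt_14_general s m hm q hq h k hdvd hk α β hα hβ X Y hX hY
end
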